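/- Let g be a weight function on ℝ^{2n+1} = ℝ^{2n} × ℝ and m a weight for g, and suppose g(λ^{1/2}w, λ) ≥ λ^{1/2} for all w ∈ ℝ^{2n} and λ > 0. Then there exist constants C', M' > 0, independent of λ, such that for every λ > 0 the function g^{(λ)}(w) := λ^{-1/2} g(λ^{1/2}w, λ) is a weight function on ℝ^{2n} with constants C', M', and the function m_{(λ)}(w) := m(λ^{1/2}w, λ) is a weight for g^{(λ)} with constants C', M'. -/

import Mathlib

/-!
Restricting to the hyperplane `{λ} × ℝ^{2n}` and rescaling `w ↦ λ^{1/2} w` multiplies distances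
by `λ^{1/2}`; dividing `g` by the same factor leaves every quotient `‖x - y‖ / g x` unchanged, so
the weight inequalities for `g` and `m` transfer with the same constants. The lower bound
`g(λ^{1/2} w, λ) ≥ λ^{1/2}` is exactly what keeps the rescaled `g` above `1`.
-/

open MeasureTheory Complex Topology Filter
open scoped RealInnerProductSpace ENNReal

noncomputable section

/-- A weight function with explicit constants `C, M`. -/
def IsWeightFnWith {X : Type*} [NormedAddCommGroup X] (C M : ℝ) (g : X → ℝ) : Prop :=
  Continuous g ∧ (∀ x, 1 ≤ g x) ∧ ∀ x y : X,
    g x / g y ≤ C * (1 + ‖x - y‖ / g x) ^ M ∧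
    g y / g x ≤ C * (1 + ‖x - y‖ / g x) ^ M

/-- A weight for `g` with explicit constants `C, M`. -/
def IsWeightWith {X : Type*} [NormedAddCommGroup X] (C M : ℝ) (g m : X → ℝ) : Prop :=
  (∀ x, 0 < m x) ∧ ∀ x y : X,
    m x / m y ≤ C * (1 + ‖x - y‖ / g x) ^ M ∧
    m y / m x ≤ C * (1 + ‖x - y‖ / g x) ^ M

/-- A weight function (with some constants). -/
def IsWeightFn {X : Type*} [NormedAddCommGroup X] (g : X → ℝ) : Prop :=
  ∃ C M : ℝ, 0 < C ∧ 0 < M ∧ IsWeightFnWith C M g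

/-- A weight for `g` (with some constants). -/
def IsWeight {X : Type*} [NormedAddCommGroup X] (g m : X → ℝ) : Prop :=
  ∃ C M : ℝ, 0 < C ∧ 0 < M ∧ IsWeightWith C M g m

section Weights

variable {X Y : Type*} [NormedAddCommGroup X] [NormedAddCommGroup Y]

lemma mul_one_add_rpow_le_mul_one_add_rpow {t C C' M M' : ℝ} (ht : 0 ≤ t) (hC' : 0 ≤ C')
    (hCC' : C ≤ C') (hMM' : M ≤ M') : C * (1 + t) ^ M ≤ C' * (1 + t) ^ M' :=
  calc C * (1 + t) ^ M ≤ C' * (1 + t) ^ M :=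
        mul_le_mul_of_nonneg_right hCC' (Real.rpow_nonneg (by linarith) _)
    _ ≤ C' * (1 + t) ^ M' :=
        mul_le_mul_of_nonneg_left (Real.rpow_le_rpow_of_exponent_le (by linarith) hMM') hC'

lemma IsWeightWith.mono {C M C' M' : ℝ} {g m : X → ℝ} (h : IsWeightWith C M g m)
    (hg : ∀ x, 0 ≤ g x) (hC' : 0 ≤ C') (hCC' : C ≤ C') (hMM' : M ≤ M') :
    IsWeightWith C' M' g m := by
  refine ⟨h.1, fun x y => ?_⟩
  have hle := mul_one_add_rpow_le_mul_one_add_rpow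
    (div_nonneg (norm_nonneg (x - y)) (hg x)) hC' hCC' hMM'
  exact ⟨(h.2 x y).1.trans hle, (h.2 x y).2.trans hle⟩

lemma isWeightFnWith_iff {C M : ℝ} {g : X → ℝ} :
    IsWeightFnWith C M g ↔ Continuous g ∧ (∀ x, 1 ≤ g x) ∧ IsWeightWith C M g g := by
  constructor
  · rintro ⟨hcont, hone, hbound⟩
    exact ⟨hcont, hone, fun x => one_pos.trans_le (hone x), hbound⟩
  · rintro ⟨hcont, hone, -, hbound⟩
    exact ⟨hcont, hone, hbound⟩

lemma IsWeightFnWith.mono {C M C' M' : ℝ} {g : X → ℝ} (h : IsWeightFnWith C M g)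
    (hC' : 0 ≤ C') (hCC' : C ≤ C') (hMM' : M ≤ M') : IsWeightFnWith C' M' g := by
  obtain ⟨hcont, hone, hweight⟩ := isWeightFnWith_iff.mp h
  exact isWeightFnWith_iff.mpr
    ⟨hcont, hone, hweight.mono (fun x => zero_le_one.trans (hone x)) hC' hCC' hMM'⟩

lemma IsWeightWith.const_mul {C M c : ℝ} {g m : X → ℝ} (h : IsWeightWith C M g m) (hc : 0 < c) :
    IsWeightWith C M g (fun x => c * m x) := by
  refine ⟨fun x => mul_pos hc (h.1 x), fun x y => ?_⟩
  simp only [mul_div_mul_left _ _ hc.ne']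
  exact h.2 x y

lemma IsWeightWith.comp_dilation {C M s : ℝ} {g m : X → ℝ} {ι : Y → X}
    (h : IsWeightWith C M g m) (hι : ∀ w v, ‖ι w - ι v‖ = s * ‖w - v‖) :
    IsWeightWith C M (fun w => s⁻¹ * g (ι w)) (fun w => m (ι w)) := by
  refine ⟨fun w => h.1 (ι w), fun w v => ?_⟩
  have hquot : ‖w - v‖ / (s⁻¹ * g (ι w)) = ‖ι w - ι v‖ / g (ι w) := by
    rw [hι, div_eq_mul_inv, mul_inv, inv_inv, div_eq_mul_inv]
    ring
  rw [hquot]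
  exact h.2 (ι w) (ι v)

lemma continuous_of_norm_sub_eq_mul {s : ℝ} {ι : Y → X}
    (hι : ∀ w v, ‖ι w - ι v‖ = s * ‖w - v‖) : Continuous ι :=
  (LipschitzWith.of_dist_le_mul (K := s.toNNReal) fun w v => by
    rw [dist_eq_norm, dist_eq_norm, hι]
    exact mul_le_mul_of_nonneg_right (Real.le_coe_toNNReal s) (norm_nonneg _)).continuous

lemma IsWeightFnWith.comp_dilation {C M s : ℝ} {g : X → ℝ} {ι : Y → X}
    (h : IsWeightFnWith C M g) (hs : 0 < s) (hι : ∀ w v, ‖ι w - ι v‖ = s * ‖w - v‖)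
    (hlow : ∀ w, s ≤ g (ι w)) : IsWeightFnWith C M (fun w => s⁻¹ * g (ι w)) := by
  obtain ⟨hcont, -, hweight⟩ := isWeightFnWith_iff.mp h
  refine isWeightFnWith_iff.mpr ⟨?_, fun w => (one_le_inv_mul₀ hs).mpr (hlow w), ?_⟩
  · exact continuous_const.mul (hcont.comp (continuous_of_norm_sub_eq_mul hι))
  · exact (hweight.comp_dilation hι).const_mul (inv_pos.mpr hs)

end Weights

lemma norm_smul_prod_sub_smul_prod {E F : Type*} [NormedAddCommGroup E] [NormedSpace ℝ E]
    [NormedAddCommGroup F] {s : ℝ} (hs : 0 ≤ s) (y : F) (w v : E) :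
    ‖((s • w, y) : E × F) - (s • v, y)‖ = s * ‖w - v‖ := by
  rw [Prod.mk_sub_mk, sub_self, ← smul_sub, Prod.norm_mk, norm_zero, norm_smul,
    Real.norm_of_nonneg hs]
  exact max_eq_left (by positivity)

/-- If `g` is a weight function on `ℝ^{2n+1} = ℝ^{2n} × ℝ`, `m` a weight for `g`, and
`g(λ^{1/2}w, λ) ≥ λ^{1/2}`, then uniformly in `λ > 0` the rescaled function
`g^{(λ)}(w) = λ^{-1/2} g(λ^{1/2}w, λ)` is a weight function on `ℝ^{2n}` and
`m_{(λ)}(w) = m(λ^{1/2}w, λ)` is a weight for it. -/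
theorem statement9 (n : ℕ)
    (g m : EuclideanSpace ℝ (Fin (2 * n)) × ℝ → ℝ)
    (hg : IsWeightFn g) (hm : IsWeight g m)
    (hglow : ∀ (w : EuclideanSpace ℝ (Fin (2 * n))) (lam : ℝ), 0 < lam →
      Real.sqrt lam ≤ g (Real.sqrt lam • w, lam)) :
    ∃ C' M' : ℝ, 0 < C' ∧ 0 < M' ∧ ∀ lam : ℝ, 0 < lam →
      IsWeightFnWith C' M'
        (fun w : EuclideanSpace ℝ (Fin (2 * n)) =>
          (Real.sqrt lam)⁻¹ * g (Real.sqrt lam • w, lam)) ∧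
      IsWeightWith C' M'
        (fun w : EuclideanSpace ℝ (Fin (2 * n)) =>
          (Real.sqrt lam)⁻¹ * g (Real.sqrt lam • w, lam))
        (fun w : EuclideanSpace ℝ (Fin (2 * n)) => m (Real.sqrt lam • w, lam)) := by
  obtain ⟨C, M, hC, hM, hgw⟩ := hg
  obtain ⟨C₂, M₂, -, -, hmw⟩ := hm
  refine ⟨max C C₂, max M M₂, hC.trans_le (le_max_left _ _), hM.trans_le (le_max_left _ _),
    fun lam hlam => ?_⟩
  have hs : 0 < Real.sqrt lam := Real.sqrt_pos.mpr hlam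
  have hι := norm_smul_prod_sub_smul_prod (E := EuclideanSpace ℝ (Fin (2 * n))) hs.le lam
  have hgLam := hgw.comp_dilation hs hι (hglow · lam hlam)
  have hC' : 0 ≤ max C C₂ := hC.le.trans (le_max_left _ _)
  exact ⟨hgLam.mono hC' (le_max_left _ _) (le_max_left _ _),
    (hmw.comp_dilation hι).mono (fun w => zero_le_one.trans (hgLam.2.1 w)) hC'
      (le_max_right _ _) (le_max_right _ _)⟩
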